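/- arXiv:2306.05167 — 2 statements merged into one kernel-verified Lean document; each statement's English description precedes it below -/
import Mathlib

section
/- Let ε ≥ 0, let λ be a complex number, let u : ℕ → ℂ be an input sequence, and let δ : ℕ → ℝ satisfy |δ_k| ≤ ε for all k. Define the floating-point recursive sums by sum_0 = (1 + δ_0)·u_0 and sum_t = (1 + δ_t)·(u_t + λ·sum_{t-1}) for t ≥ 1, and let the exact state be x_t = Σ_{i=0}^{t} λ^{t-i}·u_i. Then for every t ≥ 0, the forward error satisfies |sum_t − x_t| ≤ ((1 + ε)^{t+1} − 1)·Σ_{i=0}^{t} |λ|^{t-i}·|u_i|. -/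
/-!
The rounding error obeys its own linear recursion: writing `e t = sum t - x t`,
`e (t+1) = (1 + δ (t+1)) λ e t + δ (t+1) x (t+1)`. Bounding `‖x t‖` by the same recursion run
on `‖λ‖` and `‖u t‖`, an induction on `t` closes because
`(1 + ε) ((1 + ε)^(t+1) - 1) + ε = (1 + ε)^(t+2) - 1`.
-/

open Finset

variable {R : Type*}

section Semiring

variable [Semiring R]

def recurrentState (lam : R) (u : ℕ → R) (t : ℕ) : R :=
  ∑ i ∈ range (t + 1), lam ^ (t - i) * u i

@[simp]
lemma recurrentState_zero (lam : R) (u : ℕ → R) : recurrentState lam u 0 = u 0 := by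
  simp [recurrentState]

lemma recurrentState_succ (lam : R) (u : ℕ → R) (t : ℕ) :
    recurrentState lam u (t + 1) = u (t + 1) + lam * recurrentState lam u t := by
  rw [recurrentState, sum_range_succ, Nat.sub_self, pow_zero, one_mul, add_comm,
    recurrentState, mul_sum]
  congr 1
  refine sum_congr rfl fun i hi => ?_
  rw [← mul_assoc, ← pow_succ', Nat.sub_add_comm (mem_range_succ_iff.mp hi)]

end Semiring

section Normed

variable [SeminormedRing R] [NormOneClass R]

lemma norm_recurrentState_le (lam : R) (u : ℕ → R) (t : ℕ) :
    ‖recurrentState lam u t‖ ≤ recurrentState ‖lam‖ (‖u ·‖) t :=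
  (norm_sum_le _ _).trans <| sum_le_sum fun _ _ =>
    (norm_mul_le _ _).trans <| mul_le_mul_of_nonneg_right (norm_pow_le _ _) (norm_nonneg _)

lemma norm_perturbed_update_sub_le (δ lam a s x : R) :
    ‖(1 + δ) * (a + lam * s) - (a + lam * x)‖ ≤
      (1 + ‖δ‖) * ‖lam‖ * ‖s - x‖ + ‖δ‖ * ‖a + lam * x‖ := by
  have h1δ : ‖1 + δ‖ ≤ 1 + ‖δ‖ := (norm_add_le _ _).trans_eq (by rw [norm_one])
  calc ‖(1 + δ) * (a + lam * s) - (a + lam * x)‖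
      = ‖(1 + δ) * lam * (s - x) + δ * (a + lam * x)‖ := by congr 1; noncomm_ring
    _ ≤ ‖(1 + δ) * lam * (s - x)‖ + ‖δ * (a + lam * x)‖ := norm_add_le _ _
    _ ≤ ‖1 + δ‖ * ‖lam‖ * ‖s - x‖ + ‖δ‖ * ‖a + lam * x‖ :=
      add_le_add (norm_mul₃_le ..) (norm_mul_le _ _)
    _ ≤ (1 + ‖δ‖) * ‖lam‖ * ‖s - x‖ + ‖δ‖ * ‖a + lam * x‖ := by gcongr

theorem norm_sub_recurrentState_le {ε : ℝ} {lam : R} {u δ s : ℕ → R}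
    (hδ : ∀ k, ‖δ k‖ ≤ ε) (hs0 : s 0 = (1 + δ 0) * u 0)
    (hs : ∀ t, s (t + 1) = (1 + δ (t + 1)) * (u (t + 1) + lam * s t)) (t : ℕ) :
    ‖s t - recurrentState lam u t‖ ≤
      ((1 + ε) ^ (t + 1) - 1) * recurrentState ‖lam‖ (‖u ·‖) t := by
  have hε : 0 ≤ ε := (norm_nonneg _).trans (hδ 0)
  induction t with
  | zero =>
    calc ‖s 0 - recurrentState lam u 0‖ = ‖δ 0 * u 0‖ := by
          rw [hs0, recurrentState_zero]; congr 1; noncomm_ring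
      _ ≤ ε * ‖u 0‖ := (norm_mul_le _ _).trans (by gcongr; exact hδ 0)
      _ = ((1 + ε) ^ (0 + 1) - 1) * recurrentState ‖lam‖ (‖u ·‖) 0 := by simp
  | succ t ih =>
    set x := recurrentState lam u t
    set S := recurrentState ‖lam‖ (‖u ·‖) t
    have hxS : ‖x‖ ≤ S := norm_recurrentState_le lam u t
    have hp : 1 ≤ (1 + ε) ^ (t + 1) := one_le_pow₀ (by linarith)
    have hu : ‖u (t + 1) + lam * x‖ ≤ ‖u (t + 1)‖ + ‖lam‖ * S :=
      (norm_add_le _ _).trans (add_le_add_right ((norm_mul_le _ _).trans (by gcongr)) _)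
    rw [hs, recurrentState_succ, recurrentState_succ]
    calc _ ≤ (1 + ‖δ (t + 1)‖) * ‖lam‖ * ‖s t - x‖ + ‖δ (t + 1)‖ * ‖u (t + 1) + lam * x‖ :=
          norm_perturbed_update_sub_le ..
      _ ≤ (1 + ε) * ‖lam‖ * (((1 + ε) ^ (t + 1) - 1) * S) + ε * (‖u (t + 1)‖ + ‖lam‖ * S) := by
          have hS : 0 ≤ S := (norm_nonneg _).trans hxS
          gcongr <;> exact hδ (t + 1)
      _ ≤ ((1 + ε) ^ (t + 1 + 1) - 1) * (‖u (t + 1)‖ + ‖lam‖ * S) := by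
          have hgap : 0 ≤ (1 + ε) * ((1 + ε) ^ (t + 1) - 1) * ‖u (t + 1)‖ := by
            have := sub_nonneg.2 hp
            positivity
          linear_combination hgap

end Normed

theorem recurrent_view_forward_error_general
    (ε : ℝ) (lam : ℂ) (u : ℕ → ℂ) (δ : ℕ → ℝ)
    (hδ : ∀ k, |δ k| ≤ ε)
    (sum : ℕ → ℂ)
    (hsum0 : sum 0 = (1 + (δ 0 : ℂ)) * u 0)
    (hsum : ∀ t, sum (t + 1) = (1 + (δ (t + 1) : ℂ)) * (u (t + 1) + lam * sum t)) :
    ∀ t : ℕ,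
      ‖sum t - ∑ i ∈ Finset.range (t + 1), lam ^ (t - i) * u i‖ ≤
        ((1 + ε) ^ (t + 1) - 1) *
          ∑ i ∈ Finset.range (t + 1), ‖lam‖ ^ (t - i) * ‖u i‖ :=
  norm_sub_recurrentState_le (δ := fun k => (δ k : ℂ)) (fun k => by simpa using hδ k) hsum0 hsum

/-- **Forward error of the floating-point recurrent view (single channel).**
Let `ε ≥ 0`, `λ : ℂ`, `u : ℕ → ℂ`, and `δ : ℕ → ℝ` with `|δ k| ≤ ε` for all `k`.
Define `sum 0 = (1 + δ 0) * u 0` and `sum (t+1) = (1 + δ (t+1)) * (u (t+1) + λ * sum t)`.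
Let the exact state be `x t = ∑ i in range (t+1), λ^(t-i) * u i`.  Then for all `t`,
`|sum t - x t| ≤ ((1 + ε)^(t+1) - 1) * ∑ i in range (t+1), |λ|^(t-i) * |u i|`. -/
theorem recurrent_view_forward_error
    (ε : ℝ) (hε : 0 ≤ ε) (lam : ℂ) (u : ℕ → ℂ) (δ : ℕ → ℝ)
    (hδ : ∀ k, |δ k| ≤ ε)
    (sum : ℕ → ℂ)
    (hsum0 : sum 0 = (1 + (δ 0 : ℂ)) * u 0)
    (hsum : ∀ t, sum (t + 1) = (1 + (δ (t + 1) : ℂ)) * (u (t + 1) + lam * sum t)) :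
    ∀ t : ℕ,
      ‖sum t - ∑ i ∈ Finset.range (t + 1), lam ^ (t - i) * u i‖ ≤
        ((1 + ε) ^ (t + 1) - 1) *
          ∑ i ∈ Finset.range (t + 1), ‖lam‖ ^ (t - i) * ‖u i‖ :=
  recurrent_view_forward_error_general ε lam u δ hδ sum hsum0 hsum
end

section
/- Let ε ≥ 0, let λ_1, …, λ_N be complex numbers, let u : ℕ → ℂ be an input sequence, and for each coordinate j let δ^{(j)} : ℕ → ℝ satisfy |δ^{(j)}_k| ≤ ε for all k. For each j define the perturbed coordinate sums by sum^{(j)}_0 = (1 + δ^{(j)}_0)·u_0 and sum^{(j)}_t = (1 + δ^{(j)}_t)·(u_t + λ_j·sum^{(j)}_{t-1}), and let the exact coordinate states be x_t(j) = Σ_{i=0}^{t} λ_j^{t-i}·u_i. Then for any output coefficients c_1, …, c_N ∈ ℂ, the output error satisfies |Σ_{j=1}^{N} c_j·sum^{(j)}_t − Σ_{j=1}^{N} c_j·x_t(j)| ≤ ((1 + ε)^{t+1} − 1)·Σ_{j=1}^{N} |c_j|·Σ_{i=0}^{t} |λ_j|^{t-i}·|u_i|; in particular, when |c_j| ≤ 1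 and |λ_j| ≤ 1 for all j, the error is at most N·((1 + ε)^{t+1} − 1)·Σ_{i=0}^{t} |u_i|. -/
/-!
Write `x_t = ∑_{i ≤ t} λ^{t-i} u_i` and `A_t = ∑_{i ≤ t} |λ|^{t-i} |u_i|`, so that
`x_{t+1} = u_{t+1} + λ x_t` and `A_{t+1} = |u_{t+1}| + |λ| A_t ≥ |λ| A_t`. The coordinate error
`e_t = S_t - x_t` satisfies `e_{t+1} = δ_{t+1} x_{t+1} + (1 + δ_{t+1}) λ e_t`, so inductively
`|e_{t+1}| ≤ ε A_{t+1} + (1 + ε) ((1 + ε)^{t+1} - 1) A_{t+1} = ((1 + ε)^{t+2} - 1) A_{t+1}`.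
The output error is bounded coordinatewise by the triangle inequality.
-/

open Finset

def ssmState {R : Type*} [CommSemiring R] (a : R) (u : ℕ → R) (t : ℕ) : R :=
  ∑ i ∈ range (t + 1), a ^ (t - i) * u i

section State

variable {R : Type*} [CommSemiring R] (a : R) (u : ℕ → R)

@[simp]
theorem ssmState_zero : ssmState a u 0 = u 0 := by
  simp [ssmState]

theorem ssmState_succ (t : ℕ) : ssmState a u (t + 1) = u (t + 1) + a * ssmState a u t := by
  rw [ssmState, sum_range_succ, Nat.sub_self, pow_zero, one_mul, add_comm, ssmState, mul_sum]
  congr 1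
  refine sum_congr rfl fun i hi => ?_
  rw [Nat.sub_add_comm (Nat.lt_succ_iff.mp (mem_range.mp hi)), pow_succ']
  ring

end State

theorem ssmState_nonneg {a : ℝ} {u : ℕ → ℝ} (ha : 0 ≤ a) (hu : ∀ i, 0 ≤ u i) (t : ℕ) :
    0 ≤ ssmState a u t :=
  sum_nonneg fun i _ => mul_nonneg (pow_nonneg ha _) (hu i)

theorem ssmState_le_sum {a : ℝ} {u : ℕ → ℝ} (ha₀ : 0 ≤ a) (ha₁ : a ≤ 1) (hu : ∀ i, 0 ≤ u i)
    (t : ℕ) : ssmState a u t ≤ ∑ i ∈ range (t + 1), u i :=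
  sum_le_sum fun i _ => mul_le_of_le_one_left (hu i) (pow_le_one₀ ha₀ ha₁)

theorem norm_ssmState_le {𝕜 : Type*} [NormedField 𝕜] (a : 𝕜) (u : ℕ → 𝕜) (t : ℕ) :
    ‖ssmState a u t‖ ≤ ssmState ‖a‖ (‖u ·‖) t :=
  (norm_sum_le _ _).trans_eq <| sum_congr rfl fun i _ => by rw [norm_mul, norm_pow]

theorem norm_sub_ssmState_le {𝕜 : Type*} [NormedField 𝕜] {ε : ℝ} {a : 𝕜} {u δ S : ℕ → 𝕜}
    (hδ : ∀ k, ‖δ k‖ ≤ ε) (hS₀ : S 0 = (1 + δ 0) * u 0)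
    (hS : ∀ t, S (t + 1) = (1 + δ (t + 1)) * (u (t + 1) + a * S t)) (t : ℕ) :
    ‖S t - ssmState a u t‖ ≤ ((1 + ε) ^ (t + 1) - 1) * ssmState ‖a‖ (‖u ·‖) t := by
  have hε : 0 ≤ ε := (norm_nonneg _).trans (hδ 0)
  induction t with
  | zero =>
    rw [hS₀, ssmState_zero, ssmState_zero, show (1 + δ 0) * u 0 - u 0 = δ 0 * u 0 by ring,
      norm_mul, zero_add, pow_one, add_sub_cancel_left]
    exact mul_le_mul_of_nonneg_right (hδ 0) (norm_nonneg _)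
  | succ t ih =>
    have hA : ‖a‖ * ssmState ‖a‖ (‖u ·‖) t ≤ ssmState ‖a‖ (‖u ·‖) (t + 1) := by
      rw [ssmState_succ]; linarith [norm_nonneg (u (t + 1))]
    set A := ssmState ‖a‖ (‖u ·‖)
    have hδ₁ : ‖1 + δ (t + 1)‖ ≤ 1 + ε := (norm_add_le _ _).trans (by simpa using hδ (t + 1))
    have split : S (t + 1) - ssmState a u (t + 1) =
        δ (t + 1) * ssmState a u (t + 1) + (1 + δ (t + 1)) * a * (S t - ssmState a u t) := by
      rw [hS, ssmState_succ]; ring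
    have hE : 0 ≤ (1 + ε) ^ (t + 1) - 1 := sub_nonneg.2 (one_le_pow₀ (by linarith))
    calc ‖S (t + 1) - ssmState a u (t + 1)‖
        ≤ ‖δ (t + 1)‖ * ‖ssmState a u (t + 1)‖ +
            ‖1 + δ (t + 1)‖ * ‖a‖ * ‖S t - ssmState a u t‖ := by
          rw [split, ← norm_mul, ← norm_mul, ← norm_mul]; exact norm_add_le _ _
      _ ≤ ε * A (t + 1) + (1 + ε) * ‖a‖ * (((1 + ε) ^ (t + 1) - 1) * A t) := by
          gcongr
          · exact hδ _
          · exact norm_ssmState_le a u _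
      _ = ε * A (t + 1) + (1 + ε) * ((1 + ε) ^ (t + 1) - 1) * (‖a‖ * A t) := by ring
      _ ≤ ε * A (t + 1) + (1 + ε) * ((1 + ε) ^ (t + 1) - 1) * A (t + 1) := by gcongr
      _ = ((1 + ε) ^ (t + 1 + 1) - 1) * A (t + 1) := by ring

theorem norm_sum_mul_sub_sum_mul_le {ι R : Type*} [SeminormedRing R] (s : Finset ι)
    (c x y : ι → R) : ‖∑ j ∈ s, c j * x j - ∑ j ∈ s, c j * y j‖ ≤ ∑ j ∈ s, ‖c j‖ * ‖x j - y j‖ := by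
  rw [← sum_sub_distrib]
  exact (norm_sum_le _ _).trans <| sum_le_sum fun j _ => by rw [← mul_sub]; exact norm_mul_le _ _

/-- **N-coordinate forward error bound for a diagonal state-space layer.**
For each coordinate `j`, the floating-point recursion is
`S j 0 = (1 + δ j 0) * u 0`, `S j (t+1) = (1 + δ j (t+1)) * (u (t+1) + λ j * S j t)`,
with `|δ j k| ≤ ε`, and the exact coordinate state is
`x t j = ∑ i ≤ t, λ j ^ (t-i) * u i`.  Then for any output coefficients `c j`,
`|∑ j, c j * S j t - ∑ j, c j * x t j|
  ≤ ((1+ε)^(t+1) - 1) * ∑ j, |c j| * ∑ i ≤ t, |λ j|^(t-i) * |u i|`;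
in particular, if `|c j| ≤ 1` and `|λ j| ≤ 1` for all `j`, the error is at most
`N * ((1+ε)^(t+1) - 1) * ∑ i ≤ t, |u i|`. -/
theorem diagonal_ssm_output_forward_error
    (ε : ℝ) (hε : 0 ≤ ε) (N : ℕ) (lam : Fin N → ℂ) (u : ℕ → ℂ)
    (δ : Fin N → ℕ → ℝ) (hδ : ∀ j k, |δ j k| ≤ ε)
    (S : Fin N → ℕ → ℂ)
    (hS0 : ∀ j, S j 0 = (1 + (δ j 0 : ℂ)) * u 0)
    (hS : ∀ j t, S j (t + 1) = (1 + (δ j (t + 1) : ℂ)) * (u (t + 1) + lam j * S j t))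
    (c : Fin N → ℂ) :
    ∀ t : ℕ,
      (‖(∑ j, c j * S j t -
          ∑ j, c j * ∑ i ∈ Finset.range (t + 1), lam j ^ (t - i) * u i)‖ ≤
        ((1 + ε) ^ (t + 1) - 1) *
          ∑ j, ‖(c j)‖ *
            ∑ i ∈ Finset.range (t + 1), ‖(lam j)‖ ^ (t - i) * ‖(u i)‖) ∧
      ((∀ j, ‖(c j)‖ ≤ 1) → (∀ j, ‖(lam j)‖ ≤ 1) →
        ‖(∑ j, c j * S j t -
            ∑ j, c j * ∑ i ∈ Finset.range (t + 1), lam j ^ (t - i) * u i)‖ ≤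
          N * ((1 + ε) ^ (t + 1) - 1) *
            ∑ i ∈ Finset.range (t + 1), ‖(u i)‖) := by
  intro t
  set E := (1 + ε) ^ (t + 1) - 1
  have hcoord j : ‖S j t - ssmState (lam j) u t‖ ≤ E * ssmState ‖lam j‖ (‖u ·‖) t :=
    norm_sub_ssmState_le (δ := fun k => (δ j k : ℂ))
      (fun k => by rw [Complex.norm_real, Real.norm_eq_abs]; exact hδ j k) (hS0 j) (hS j) t
  have hmain : ‖∑ j, c j * S j t - ∑ j, c j * ssmState (lam j) u t‖ ≤
      E * ∑ j, ‖c j‖ * ssmState ‖lam j‖ (‖u ·‖) t :=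
    calc _ ≤ ∑ j, ‖c j‖ * ‖S j t - ssmState (lam j) u t‖ := norm_sum_mul_sub_sum_mul_le _ _ _ _
      _ ≤ ∑ j, ‖c j‖ * (E * ssmState ‖lam j‖ (‖u ·‖) t) := by gcongr with j; exact hcoord j
      _ = _ := by rw [mul_sum]; exact sum_congr rfl fun j _ => mul_left_comm _ _ _
  refine ⟨hmain, fun hc hlam => hmain.trans ?_⟩
  have hE : 0 ≤ E := sub_nonneg.2 (one_le_pow₀ (by linarith))
  calc E * ∑ j, ‖c j‖ * ssmState ‖lam j‖ (‖u ·‖) t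
        ≤ E * ∑ _j : Fin N, ∑ i ∈ range (t + 1), ‖u i‖ := by
        gcongr with j
        exact (mul_le_of_le_one_left (ssmState_nonneg (norm_nonneg _) (fun i => norm_nonneg _) t)
          (hc j)).trans (ssmState_le_sum (norm_nonneg _) (hlam j) (fun i => norm_nonneg _) t)
    _ = N * E * ∑ i ∈ range (t + 1), ‖u i‖ := by
        rw [sum_const, card_univ, Fintype.card_fin, nsmul_eq_mul]; ring
end
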